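/- arXiv:0802.2920 — 2 statements merged into one kernel-verified Lean document; each statement's English description precedes it below -/
import Mathlib

section
/- Let (A,B) be a NITA generated by a non-real element b_3 ∈ B of degree 3 with b_3·b̄_3 = 1 + b_8, with no nontrivial basis elements of degree 1 or 2, and assume b_3² = b_4 + b_5 with b_4, b_5 ∈ B of degrees 4 and 5. Then b̄_3·b_4 = b_3 + b_9 for some b_9 ∈ B of degree 9, and b_4·b̄_4 = 1 + b_8 + c_7 for some element c_7 which is a nonnegative integer combination of basis elements of total degree 7. -/
/-- A normalized table algebra datum on a commutative `ℂ`-algebra `A`: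
a distinguished basis `B` containing `1`, an involutive algebra
endomorphism `bar` permuting `B`, a bilinear form for which `B` is
orthonormal and which satisfies `(a, bc) = (a·b̄, c)`, nonnegative real
structure constants, and a degree homomorphism positive on `B`. -/
structure TAData (A : Type) [CommRing A] [Algebra ℂ A] : Type where
  B : Finset A
  one_mem : (1 : A) ∈ B
  indep : LinearIndependent ℂ (fun b : {x : A // x ∈ B} => (b : A))
  span_top : Submodule.span ℂ (B : Set A) = ⊤
  bar : A →ₐ[ℂ] A
  bar_bar : ∀ a : A, bar (bar a) = a
  bar_mem : ∀ b ∈ B, bar b ∈ B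
  ip : A →ₗ[ℂ] A →ₗ[ℂ] ℂ
  ip_symm : ∀ a b : A, ip a b = ip b a
  ip_self : ∀ b ∈ B, ip b b = 1
  ip_ne : ∀ b ∈ B, ∀ c ∈ B, b ≠ c → ip b c = 0
  ip_assoc : ∀ a b c : A, ip a (b * c) = ip (a * bar b) c
  struct_nonneg : ∀ b ∈ B, ∀ c ∈ B, ∀ d ∈ B, ∃ r : ℝ, 0 ≤ r ∧ ip (b * c) d = (r : ℂ)
  deg : A →ₐ[ℂ] ℂ
  deg_pos : ∀ b ∈ B, ∃ r : ℝ, 0 < r ∧ deg b = (r : ℂ)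

namespace TAData

variable {A : Type} [CommRing A] [Algebra ℂ A]

/-- Integrality (making a table algebra a NITA): all structure constants are
nonnegative integers and all degrees are positive integers. -/
def Integral (T : TAData A) : Prop :=
  (∀ b ∈ T.B, ∀ c ∈ T.B, ∀ d ∈ T.B, ∃ n : ℕ, T.ip (b * c) d = (n : ℂ)) ∧
  (∀ b ∈ T.B, ∃ n : ℕ, 0 < n ∧ T.deg b = (n : ℂ))

/-- `L₁(B) = {1}` and `L₂(B) = ∅`: no nontrivial basis elements of degree 1 or 2. -/
def NoSmall (T : TAData A) : Prop :=
  (∀ b ∈ T.B, T.deg b = 1 → b = 1) ∧ (∀ b ∈ T.B, T.deg b ≠ 2)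

/-- The table algebra is generated (as an algebra) by `b` (and its conjugate). -/
def GeneratedBy (T : TAData A) (b : A) : Prop :=
  Algebra.adjoin ℂ ({b, T.bar b} : Set A) = ⊤

/-- A table subset of `B`: contains `1`, closed under the involution and under
supports of products. -/
def IsTableSubset (T : TAData A) (C : Set A) : Prop :=
  C ⊆ ↑T.B ∧ (1 : A) ∈ C ∧ (∀ b ∈ C, T.bar b ∈ C) ∧
    ∀ b ∈ C, ∀ c ∈ C, ∀ d ∈ T.B, T.ip (b * c) d ≠ 0 → d ∈ C

end TAData

/-
Put x = b̄₃b₄. Frobenius reciprocity gives (x, b₃) = (b₄, b₃²) = 1 and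
(x, x) = (b₃b̄₃, b₄b̄₄) = 1 + k with k = (b₄b̄₄, b₈). Writing b₄b̄₄ = 1 + k·b₈ + c with c a
nonnegative integer combination of B, degrees give 16 = 1 + 8k + deg c, so k ≤ 1. A nonnegative
integer combination of norm 1 is a basis element, so k = 0 would force x = b₃, against
deg x = 12. Hence k = 1, c₇ := c has degree 7, and x − b₃ has norm 1, so it is the required b₉.
-/

theorem Finset.exists_eq_one_of_sum_sq_eq_one {ι : Type*} {s : Finset ι} {f : ι → ℕ}
    (h : ∑ i ∈ s, f i ^ 2 = 1) : ∃ i ∈ s, f i = 1 ∧ ∀ j ∈ s, j ≠ i → f j = 0 := by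
  classical
  obtain ⟨i, hi, hfi⟩ := Finset.exists_ne_zero_of_sum_ne_zero (h ▸ one_ne_zero)
  have hsplit := Finset.add_sum_erase s (fun j => f j ^ 2) hi
  have hpos : 1 ≤ f i ^ 2 := Nat.one_le_iff_ne_zero.mpr hfi
  have hrest : ∑ j ∈ s.erase i, f j ^ 2 = 0 := by omega
  refine ⟨i, hi, by simpa using (show f i ^ 2 = 1 by omega), fun j hj hji => ?_⟩
  exact pow_eq_zero_iff two_ne_zero |>.mp <|
    Finset.sum_eq_zero_iff.mp hrest j (Finset.mem_erase.mpr ⟨hji, hj⟩)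

namespace TAData

variable {A : Type} [CommRing A] [Algebra ℂ A] (T : TAData A)

theorem eq_sum_ip_smul (x : A) : x = ∑ d ∈ T.B, T.ip x d • d := by
  have hx : x ∈ Submodule.span ℂ (T.B : Set A) := T.span_top ▸ Submodule.mem_top
  induction hx using Submodule.span_induction with
  | mem b hb =>
    rw [Finset.sum_eq_single_of_mem b hb, T.ip_self b hb, one_smul]
    intro d hd hne
    rw [T.ip_ne b hb d hd (Ne.symm hne), zero_smul]
  | zero => simp
  | add x y _ _ hx hy =>
    conv_lhs => rw [hx, hy]
    simp only [map_add, LinearMap.add_apply, add_smul, Finset.sum_add_distrib]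
  | smul c x _ hx =>
    conv_lhs => rw [hx]
    simp only [map_smul, LinearMap.smul_apply, smul_eq_mul, Finset.smul_sum, smul_smul]

theorem ext_ip {x y : A} (h : ∀ d ∈ T.B, T.ip x d = T.ip y d) : x = y := by
  rw [T.eq_sum_ip_smul x, T.eq_sum_ip_smul y]
  exact Finset.sum_congr rfl fun d hd => by rw [h d hd]

theorem deg_eq_sum (x : A) : T.deg x = ∑ d ∈ T.B, T.ip x d * T.deg d := by
  conv_lhs => rw [T.eq_sum_ip_smul x]
  simp only [map_sum, map_smul, smul_eq_mul]

theorem ip_self_eq_sum (x : A) : T.ip x x = ∑ d ∈ T.B, T.ip x d ^ 2 := by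
  nth_rewrite 2 [T.eq_sum_ip_smul x]
  simp only [map_sum, map_smul, smul_eq_mul, sq]

theorem ip_sum_deg_smul (z : A) : T.ip z (∑ d ∈ T.B, T.deg d • d) = T.deg z := by
  simp only [map_sum, map_smul, smul_eq_mul, T.deg_eq_sum z, mul_comm]

theorem deg_bar (x : A) : T.deg (T.bar x) = T.deg x := by
  set E : A := ∑ d ∈ T.B, T.deg d • d
  -- `E` is an eigenvector of multiplication by every `x`, with eigenvalue `deg x̄`
  have hxE : x * E = T.deg (T.bar x) • E := T.ext_ip fun c hc => by
    rw [T.ip_symm, T.ip_assoc, T.ip_sum_deg_smul, map_smul, LinearMap.smul_apply, T.ip_symm,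
      T.ip_sum_deg_smul, smul_eq_mul, map_mul, mul_comm]
  have hE : T.deg E ≠ 0 := by
    choose! r hr hdr using T.deg_pos
    have : T.deg E = ((∑ d ∈ T.B, r d * r d : ℝ) : ℂ) := by
      simp only [E, map_sum, map_smul, smul_eq_mul, Complex.ofReal_sum, Complex.ofReal_mul]
      exact Finset.sum_congr rfl fun d hd => by rw [hdr d hd]
    rw [this, Complex.ofReal_ne_zero]
    exact (Finset.sum_pos (fun d hd => mul_pos (hr d hd) (hr d hd)) ⟨1, T.one_mem⟩).ne'
  have := congrArg T.deg hxE
  rw [map_mul, map_smul, smul_eq_mul] at this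
  exact (mul_right_cancel₀ hE this).symm

theorem ip_bar_mul (a b c : A) : T.ip (T.bar a * b) c = T.ip (a * c) b := by
  rw [T.ip_symm, T.ip_assoc, T.bar_bar, mul_comm]

theorem ip_mul_mul (a b : A) : T.ip (a * b) (a * b) = T.ip (a * T.bar a) (b * T.bar b) := by
  rw [T.ip_assoc, mul_right_comm, mul_comm, T.ip_symm, T.ip_assoc, T.ip_symm]

theorem ip_mul_bar_one {b : A} (hb : b ∈ T.B) : T.ip (b * T.bar b) 1 = 1 := by
  rw [T.ip_symm, T.ip_assoc, one_mul, T.ip_self _ (T.bar_mem b hb)]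

theorem eq_of_ip_ne_zero {b c : A} (hb : b ∈ T.B) (hc : c ∈ T.B) (h : T.ip b c ≠ 0) :
    b = c :=
  by_contra fun hne => h (T.ip_ne b hb c hc hne)

def IsNatComb (x : A) : Prop :=
  ∀ d ∈ T.B, ∃ n : ℕ, T.ip x d = n

namespace IsNatComb

variable {T}

theorem sub_smul {x d : A} {n : ℕ} (hx : T.IsNatComb x) (hd : d ∈ T.B) (hn : T.ip x d = n) :
    T.IsNatComb (x - (n : ℂ) • d) := by
  intro e he
  simp only [map_sub, map_smul, LinearMap.sub_apply, LinearMap.smul_apply, smul_eq_mul]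
  by_cases hed : d = e
  · subst hed
    exact ⟨0, by rw [hn, T.ip_self d hd]; simp⟩
  · obtain ⟨m, hm⟩ := hx e he
    exact ⟨m, by rw [hm, T.ip_ne d hd e he hed, mul_zero, sub_zero]⟩

theorem exists_deg_eq {x : A} (hInt : T.Integral) (hx : T.IsNatComb x) :
    ∃ n : ℕ, T.deg x = n := by
  rw [T.deg_eq_sum]
  refine Finset.sum_induction _ (fun z : ℂ => ∃ n : ℕ, z = n)
    (fun _ _ ⟨m, hm⟩ ⟨n, hn⟩ => ⟨m + n, by rw [hm, hn, Nat.cast_add]⟩) ⟨0, by simp⟩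
    fun d hd => ?_
  obtain ⟨m, hm⟩ := hx d hd
  obtain ⟨n, -, hn⟩ := hInt.2 d hd
  exact ⟨m * n, by rw [hm, hn, Nat.cast_mul]⟩

theorem mem_of_ip_self_eq_one {x : A} (hx : T.IsNatComb x) (h : T.ip x x = 1) : x ∈ T.B := by
  choose! n hn using hx
  have hsum : ∑ d ∈ T.B, n d ^ 2 = 1 := by
    rw [T.ip_self_eq_sum, Finset.sum_congr rfl fun d hd => by rw [hn d hd]] at h
    exact_mod_cast h
  obtain ⟨b, hb, hb1, hb0⟩ := Finset.exists_eq_one_of_sum_sq_eq_one hsum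
  convert hb
  refine T.ext_ip fun d hd => ?_
  by_cases hdb : d = b
  · subst hdb
    rw [hn d hd, hb1, T.ip_self d hd, Nat.cast_one]
  · rw [hn d hd, hb0 d hd hdb, T.ip_ne b hb d hd (Ne.symm hdb), Nat.cast_zero]

theorem sub_mem_of_ip_eq_one {x b : A} (hx : T.IsNatComb x) (hb : b ∈ T.B)
    (hxb : T.ip x b = 1) (hxx : T.ip x x = 2) : x - b ∈ T.B := by
  have hy := hx.sub_smul hb (n := 1) (by rw [hxb, Nat.cast_one])
  rw [Nat.cast_one, one_smul] at hy
  refine hy.mem_of_ip_self_eq_one ?_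
  simp only [map_sub, LinearMap.sub_apply, hxx, hxb, T.ip_symm b x, T.ip_self b hb]
  norm_num

theorem eq_of_ip_eq_one {x b : A} (hx : T.IsNatComb x) (hb : b ∈ T.B) (hxx : T.ip x x = 1)
    (hxb : T.ip x b = 1) : x = b :=
  T.eq_of_ip_ne_zero (hx.mem_of_ip_self_eq_one hxx) hb (by rw [hxb]; exact one_ne_zero)

end IsNatComb

theorem ip_bar_mul_eq_one_of_mul_self_eq {a b c : A} (hb : b ∈ T.B) (hc : c ∈ T.B)
    (hcb : c ≠ b) (ha : a * a = b + c) : T.ip (T.bar a * b) a = 1 := by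
  rw [T.ip_bar_mul, ha, map_add, LinearMap.add_apply, T.ip_self b hb, T.ip_ne c hc b hb hcb,
    add_zero]

theorem ip_bar_mul_self_of_mul_bar_eq {a b d : A} (hb : b ∈ T.B) (ha : a * T.bar a = 1 + d) :
    T.ip (T.bar a * b) (T.bar a * b) = 1 + T.ip (b * T.bar b) d := by
  rw [T.ip_mul_mul, T.bar_bar, mul_comm (T.bar a) a, ha, map_add, LinearMap.add_apply,
    T.ip_symm 1, T.ip_mul_bar_one hb, T.ip_symm d]

theorem exists_isNatComb_mul_bar_eq (hInt : T.Integral) {b d : A} {k : ℕ} (hb : b ∈ T.B)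
    (hd : d ∈ T.B) (hd1 : d ≠ 1) (hk : T.ip (b * T.bar b) d = k) :
    ∃ c, T.IsNatComb c ∧ b * T.bar b = 1 + (k : ℂ) • d + c := by
  have hy : T.IsNatComb (b * T.bar b) := hInt.1 b hb _ (T.bar_mem b hb)
  have hy1 := hy.sub_smul T.one_mem (n := 1) (by rw [T.ip_mul_bar_one hb, Nat.cast_one])
  rw [Nat.cast_one, one_smul] at hy1
  refine ⟨_, hy1.sub_smul hd (n := k) ?_, by ring⟩
  rw [map_sub, LinearMap.sub_apply, hk, T.ip_ne 1 T.one_mem d hd (Ne.symm hd1), sub_zero]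

end TAData

theorem stmt_2_general {A : Type} [CommRing A] [Algebra ℂ A] (T : TAData A)
    (hInt : T.Integral)
    (b3 b8 b4 b5 : A)
    (hb3 : b3 ∈ T.B) (hd3 : T.deg b3 = 3)
    (hb8 : b8 ∈ T.B) (hd8 : T.deg b8 = 8)
    (hmul : b3 * T.bar b3 = 1 + b8)
    (hb4 : b4 ∈ T.B) (hd4 : T.deg b4 = 4)
    (hb5 : b5 ∈ T.B) (hd5 : T.deg b5 = 5)
    (hsq : b3 * b3 = b4 + b5) :
    (∃ b9 ∈ T.B, T.deg b9 = 9 ∧ T.bar b3 * b4 = b3 + b9) ∧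
    (∃ c7 : A, T.deg c7 = 7 ∧ (∀ d ∈ T.B, ∃ k : ℕ, T.ip c7 d = (k : ℂ)) ∧
      b4 * T.bar b4 = 1 + b8 + c7) := by
  set x := T.bar b3 * b4
  have hx : T.IsNatComb x := hInt.1 _ (T.bar_mem b3 hb3) _ hb4
  have hdx : T.deg x = 12 := by rw [map_mul, T.deg_bar, hd3, hd4]; norm_num
  have hx3 : T.ip x b3 = 1 := T.ip_bar_mul_eq_one_of_mul_self_eq hb4 hb5
    (fun h => by rw [h, hd4] at hd5; norm_num at hd5) hsq
  obtain ⟨k, hk⟩ := hInt.1 b4 hb4 _ (T.bar_mem b4 hb4) b8 hb8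
  have hxx : T.ip x x = 1 + k := hk ▸ T.ip_bar_mul_self_of_mul_bar_eq hb4 hmul
  obtain ⟨c, hc, hc4⟩ := T.exists_isNatComb_mul_bar_eq hInt hb4 hb8
    (fun h => by rw [h, map_one] at hd8; norm_num at hd8) hk
  have hdeg : T.deg c = 15 - 8 * k := by
    have h := congrArg T.deg hc4
    rw [map_mul, map_add, map_add, map_smul, map_one, T.deg_bar, hd4, hd8, smul_eq_mul] at h
    linear_combination -h
  have hk1 : k ≤ 1 := by
    obtain ⟨n, hn⟩ := hc.exists_deg_eq hInt
    have : (n + 8 * k : ℂ) = 15 := by linear_combination hdeg - hn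
    have : n + 8 * k = 15 := by exact_mod_cast this
    omega
  have hk0 : k ≠ 0 := by
    rintro rfl
    have := hdx ▸ congrArg T.deg (hx.eq_of_ip_eq_one hb3 (by simpa using hxx) hx3)
    norm_num [hd3] at this
  obtain rfl : k = 1 := by omega
  refine ⟨⟨x - b3, hx.sub_mem_of_ip_eq_one hb3 hx3 (by rw [hxx]; norm_num), ?_, by ring⟩,
    ⟨c, ?_, hc, by rw [hc4, Nat.cast_one, one_smul]⟩⟩
  · rw [map_sub, hdx, hd3]; norm_num
  · rw [hdeg]; norm_num

/-- if `b₃² = b₄ + b₅` then `b̄₃·b₄ = b₃ + b₉` with `b₉ ∈ B`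
of degree 9 and `b₄·b̄₄ = 1 + b₈ + c₇` with `c₇` a nonnegative-integer
combination of basis elements of total degree 7. -/
theorem stmt_2 {A : Type} [CommRing A] [Algebra ℂ A] (T : TAData A)
    (hInt : T.Integral) (hSmall : T.NoSmall)
    (b3 b8 b4 b5 : A)
    (hb3 : b3 ∈ T.B) (hd3 : T.deg b3 = 3) (hnr : T.bar b3 ≠ b3)
    (hgen : T.GeneratedBy b3)
    (hb8 : b8 ∈ T.B) (hd8 : T.deg b8 = 8)
    (hmul : b3 * T.bar b3 = 1 + b8)
    (hb4 : b4 ∈ T.B) (hd4 : T.deg b4 = 4)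
    (hb5 : b5 ∈ T.B) (hd5 : T.deg b5 = 5)
    (hsq : b3 * b3 = b4 + b5) :
    (∃ b9 ∈ T.B, T.deg b9 = 9 ∧ T.bar b3 * b4 = b3 + b9) ∧
    (∃ c7 : A, T.deg c7 = 7 ∧ (∀ d ∈ T.B, ∃ k : ℕ, T.ip c7 d = (k : ℂ)) ∧
      b4 * T.bar b4 = 1 + b8 + c7) :=
  stmt_2_general T hInt b3 b8 b4 b5 hb3 hd3 hb8 hd8 hmul hb4 hd4 hb5 hd5 hsq
end

section
/- There is no NITA (A,B) generated by a non-real element b_3 of degree 3, with no nontrivial basis elements of degree 1 or 2, satisfying b_3·b̄_3 = 1 + b_8, b_3² = b̄_3 + b_6 with b_6 ∈ B, and (b_3·b_8, b_3·b_8) = 5. -/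
open Finset

section Counting

variable {α : Type*} {s : Finset α}

lemma succ_mul_card_le_sum_add_card_filter_eq {d : α → ℕ} {c : ℕ} (h : ∀ x ∈ s, c ≤ d x) :
    (c + 1) * #s ≤ ∑ x ∈ s, d x + #{x ∈ s | d x = c} := by
  calc (c + 1) * #s = ∑ _x ∈ s, (c + 1) := by rw [sum_const, smul_eq_mul, mul_comm]
    _ ≤ ∑ x ∈ s, (d x + if d x = c then 1 else 0) :=
        sum_le_sum fun x hx => by have := h x hx; split_ifs <;> omega
    _ = ∑ x ∈ s, d x + #{x ∈ s | d x = c} := by rw [sum_add_distrib, card_filter]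

lemma sum_mul_eq_sum_filter_ne_zero {f : α → ℕ} (hf : ∀ x ∈ s, f x ≤ 1) (g : α → ℕ) :
    ∑ x ∈ s, f x * g x = ∑ x ∈ s with f x ≠ 0, g x := by
  rw [sum_filter]
  refine sum_congr rfl fun x hx => ?_
  have := hf x hx
  interval_cases f x <;> simp

lemma exists_ne_of_sum_sq_eq_three {f d e : α → ℕ} (hf : ∑ x ∈ s, f x ^ 2 = 3)
    (hd : ∑ x ∈ s, f x * d x ≤ 10) (he : ∑ x ∈ s, f x * e x ≤ 10)
    (h3 : ∀ x ∈ s, f x ≠ 0 → 3 ≤ d x ∧ 3 ≤ e x) :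
    ∃ p ∈ s, ∃ q ∈ s, p ≠ q ∧ f p ≠ 0 ∧ f q ≠ 0 ∧ d p = 3 ∧ e q = 3 := by
  classical
  have hf1 : ∀ x ∈ s, f x ≤ 1 := fun x hx => by
    have := single_le_sum (f := fun x => f x ^ 2) (fun _ _ => Nat.zero_le _) hx
    nlinarith
  set S := {x ∈ s | f x ≠ 0}
  have hSd : ∑ x ∈ S, d x ≤ 10 := sum_mul_eq_sum_filter_ne_zero hf1 d ▸ hd
  have hSe : ∑ x ∈ S, e x ≤ 10 := sum_mul_eq_sum_filter_ne_zero hf1 e ▸ he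
  have hcard : #S = 3 := by
    rw [card_eq_sum_ones, ← sum_mul_eq_sum_filter_ne_zero hf1, ← hf]
    exact sum_congr rfl fun x hx => by have := hf1 x hx; interval_cases f x <;> rfl
  have hmem : ∀ x ∈ S, x ∈ s ∧ f x ≠ 0 := fun x hx => mem_filter.mp hx
  have hD := succ_mul_card_le_sum_add_card_filter_eq (c := 3) fun x hx =>
    (h3 x (hmem x hx).1 (hmem x hx).2).1
  have hE := succ_mul_card_le_sum_add_card_filter_eq (c := 3) fun x hx =>
    (h3 x (hmem x hx).1 (hmem x hx).2).2
  obtain ⟨q, hq⟩ : ({x ∈ S | e x = 3}).Nonempty := by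
    rw [← card_pos]; omega
  obtain ⟨p, hp⟩ : (({x ∈ S | d x = 3}).erase q).Nonempty := by
    rw [← card_pos]; have := pred_card_le_card_erase (s := {x ∈ S | d x = 3}) (a := q); omega
  obtain ⟨hpq, hp⟩ := mem_erase.mp hp
  obtain ⟨hpS, hdp⟩ := mem_filter.mp hp
  obtain ⟨hqS, heq⟩ := mem_filter.mp hq
  exact ⟨p, (hmem p hpS).1, q, (hmem q hqS).1, hpq, (hmem p hpS).2, (hmem q hqS).2, hdp, heq⟩

lemma eq_zero_of_sum_mul_eq_succ [DecidableEq α] {k d : α → ℕ} {y : α} (hy : y ∈ s)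
    (h2 : ∀ x ∈ s, k x ≠ 0 → 2 ≤ d x) (hsum : ∑ x ∈ s, k x * d x = d y + 1) : k y = 0 := by
  by_contra hky
  have hdy := h2 y hy hky
  rw [← add_sum_erase s _ hy] at hsum
  have hky1 : k y = 1 := by
    by_contra hne
    have : 2 * d y ≤ k y * d y := Nat.mul_le_mul_right _ (by omega)
    omega
  have hrest : ∑ x ∈ s.erase y, k x * d x = 1 := by rw [hky1] at hsum; omega
  obtain ⟨x, hx, hx0⟩ := exists_ne_zero_of_sum_ne_zero (hrest ▸ one_ne_zero)
  have hle := single_le_sum (f := fun x => k x * d x) (fun _ _ => Nat.zero_le _) hx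
  have hkx := Nat.one_le_iff_ne_zero.mpr (left_ne_zero_of_mul hx0)
  have hdx := h2 x (mem_of_mem_erase hx) (left_ne_zero_of_mul hx0)
  nlinarith

end Counting

namespace TAData

variable {A : Type} [CommRing A] [Algebra ℂ A] (T : TAData A)

lemma bar_injective : Function.Injective T.bar :=
  Function.LeftInverse.injective T.bar_bar

lemma sum_ip_smul (w : A) : ∑ b ∈ T.B, T.ip w b • b = w := by
  let expand : A →ₗ[ℂ] A := ∑ b ∈ T.B, (T.ip.flip b).smulRight b
  have h : expand = LinearMap.id := by
    refine LinearMap.ext_on T.span_top fun c hc => ?_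
    simp only [expand, LinearMap.sum_apply, LinearMap.smulRight_apply, LinearMap.flip_apply,
      LinearMap.id_apply]
    rw [sum_eq_single_of_mem c hc fun b hb hne => by rw [T.ip_ne c hc b hb hne.symm, zero_smul],
      T.ip_self c hc, one_smul]
  simpa [expand] using LinearMap.congr_fun h w

lemma map_eq_sum_ip {M : Type*} [AddCommGroup M] [Module ℂ M] (φ : A →ₗ[ℂ] M) (w : A) :
    φ w = ∑ b ∈ T.B, T.ip w b • φ b := by
  conv_lhs => rw [← T.sum_ip_smul w]
  simp only [map_sum, map_smul]

lemma ip_bar_bar (u : A) {c : A} (hc : c ∈ T.B) : T.ip (T.bar u) (T.bar c) = T.ip u c := by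
  have hbasis : ∀ b ∈ T.B, T.ip (T.bar b) (T.bar c) = T.ip b c := fun b hb => by
    by_cases hbc : b = c
    · rw [hbc, T.ip_self _ (T.bar_mem c hc), T.ip_self c hc]
    · rw [T.ip_ne _ (T.bar_mem b hb) _ (T.bar_mem c hc) (T.bar_injective.ne hbc),
        T.ip_ne b hb c hc hbc]
  have lhs := T.map_eq_sum_ip ((T.ip.flip (T.bar c)).comp T.bar.toLinearMap) u
  have rhs := T.map_eq_sum_ip (T.ip.flip c) u
  simp only [LinearMap.comp_apply, LinearMap.flip_apply, AlgHom.toLinearMap_apply] at lhs rhs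
  rw [lhs, rhs]
  exact sum_congr rfl fun b hb => by rw [hbasis b hb]

lemma ip_mul_one (a b : A) : T.ip (a * b) 1 = T.ip (T.bar a) b := by
  rw [T.ip_symm, T.ip_assoc, one_mul]

lemma bar_eq_of_mul_bar_eq {x y : A} (h : x * T.bar x = 1 + y) : T.bar y = y := by
  have hbar := congrArg T.bar h
  rw [map_mul, T.bar_bar, map_add, map_one, mul_comm, h] at hbar
  exact (add_left_cancel hbar).symm

def HasNatCoeffs (w : A) (f : A → ℕ) : Prop := ∀ b ∈ T.B, T.ip w b = f b

variable {T}

lemma exists_hasNatCoeffs_mul (hInt : T.Integral) {b c : A} (hb : b ∈ T.B) (hc : c ∈ T.B) :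
    ∃ f, T.HasNatCoeffs (b * c) f := by
  classical
  choose f hf using hInt.1 b hb c hc
  exact ⟨fun d => if hd : d ∈ T.B then f d hd else 0, fun d hd => by simp [hd, hf]⟩

lemma exists_natDeg (hInt : T.Integral) (hSmall : T.NoSmall) :
    ∃ d : A → ℕ, ∀ b ∈ T.B, T.deg b = d b ∧ (b ≠ 1 → 3 ≤ d b) := by
  classical
  choose d hpos hd using hInt.2
  refine ⟨fun b => if hb : b ∈ T.B then d b hb else 0, fun b hb => ?_⟩
  simp only [hb, dite_true]
  refine ⟨hd b hb, fun hne => ?_⟩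
  have h1 : d b hb ≠ 1 := fun h => hne (hSmall.1 b hb (by rw [hd b hb, h, Nat.cast_one]))
  have h2 : d b hb ≠ 2 := fun h => hSmall.2 b hb (by rw [hd b hb, h, Nat.cast_two])
  have := hpos b hb
  omega

lemma HasNatCoeffs.map_eq {w : A} {f : A → ℕ} (hw : T.HasNatCoeffs w f) (φ : A →ₗ[ℂ] ℂ)
    {g : A → ℕ} (hg : ∀ b ∈ T.B, φ b = g b) : φ w = ((∑ b ∈ T.B, f b * g b : ℕ) : ℂ) := by
  rw [T.map_eq_sum_ip φ w, Nat.cast_sum]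
  exact sum_congr rfl fun b hb => by rw [hw b hb, hg b hb, smul_eq_mul, Nat.cast_mul]

lemma ip_mul_bar_eq_zero_of_deg_eq_succ (hInt : T.Integral) (hSmall : T.NoSmall) {p q y : A}
    (hp : p ∈ T.B) (hq : q ∈ T.B) (hpq : p ≠ q) (hy : y ∈ T.B)
    (hdeg : T.deg (p * T.bar q) = T.deg y + 1) : T.ip (p * T.bar q) y = 0 := by
  classical
  obtain ⟨d, hd⟩ := exists_natDeg hInt hSmall
  obtain ⟨k, hk⟩ := exists_hasNatCoeffs_mul hInt hp (T.bar_mem q hq)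
  have hk1 : k 1 = 0 := by
    have h := hk 1 T.one_mem
    rw [T.ip_mul_one, T.ip_bar_bar p hq, T.ip_ne p hp q hq hpq] at h
    exact_mod_cast h.symm
  have hsum : ∑ b ∈ T.B, k b * d b = d y + 1 := by
    have h := hk.map_eq T.deg.toLinearMap fun b hb => (hd b hb).1
    rw [AlgHom.toLinearMap_apply, hdeg, (hd y hy).1] at h
    exact_mod_cast h.symm
  have hky := eq_zero_of_sum_mul_eq_succ hy
    (fun b hb hkb => le_trans (by norm_num) ((hd b hb).2 fun h => hkb (h ▸ hk1))) hsum
  rw [hk y hy, hky, Nat.cast_zero]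

section Configuration

variable {x y z : A}

lemma exists_ip_eq_of_mul_bar_eq (hInt : T.Integral) (hx : x ∈ T.B) (hy : y ∈ T.B)
    (hz : z ∈ T.B) (hmul : x * T.bar x = 1 + y) (hsq : x * x = T.bar x + z) :
    ∃ t s : ℕ, T.ip (x * y) (x * y) = 2 + 2 * t + s ∧ T.ip (x * z) y = 1 + t ∧
      T.ip (x * z) (x * z) = 1 + s := by
  have hx' := T.bar_mem x hx
  have hz' := T.bar_mem z hz
  have hy' : T.bar y = y := T.bar_eq_of_mul_bar_eq hmul
  have hsq' : T.bar x * T.bar x = x + T.bar z := by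
    simpa only [map_mul, map_add, T.bar_bar] using congrArg T.bar hsq
  have hxy : x * y = T.bar z + z * T.bar x := by
    linear_combination T.bar x * hsq - x * hmul + hsq'
  have hyx : y * T.bar x = z + T.bar z * x := by
    simpa only [map_mul, map_add, T.bar_bar, hy', mul_comm y] using congrArg T.bar hxy
  obtain ⟨t, ht⟩ := hInt.1 z hz (T.bar x) hx' (T.bar z) hz'
  obtain ⟨s, hs⟩ := hInt.1 z hz (T.bar z) hz' y hy
  have hzz : T.ip (z * T.bar z) 1 = 1 := by rw [T.ip_mul_one, T.ip_self _ hz']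
  refine ⟨t, s, ?_, ?_, ?_⟩
  · have hnorm : T.ip (z * T.bar x) (z * T.bar x) = 1 + s := by
      rw [T.ip_assoc, show z * T.bar x * T.bar z = z * T.bar z * T.bar x by ring, ← T.ip_assoc,
        hmul, map_add, hzz, hs]
    simp only [hxy, map_add, LinearMap.add_apply]
    rw [T.ip_self _ hz', T.ip_symm (T.bar z), ht, hnorm]
    ring
  · rw [T.ip_symm, T.ip_assoc, hyx, map_add, LinearMap.add_apply, T.ip_self z hz, T.ip_symm,
      mul_comm, T.ip_assoc, ht]
  · rw [T.ip_assoc, show x * z * T.bar x = z + y * z by linear_combination z * hmul, map_add,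
      LinearMap.add_apply, T.ip_self z hz, T.ip_symm (y * z), mul_comm y, T.ip_assoc, hs]

lemma exists_hasNatCoeffs_of_ip_eq_five (hInt : T.Integral) (hx : x ∈ T.B) (hy : y ∈ T.B)
    (hz : z ∈ T.B) (hmul : x * T.bar x = 1 + y) (hsq : x * x = T.bar x + z)
    (hip : T.ip (x * y) (x * y) = 5) :
    ∃ f, T.HasNatCoeffs (x * z) f ∧ f y = 1 ∧ ∑ b ∈ T.B, f b ^ 2 = 4 := by
  obtain ⟨t, s, hxy, hxzy, hxz⟩ := exists_ip_eq_of_mul_bar_eq hInt hx hy hz hmul hsq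
  obtain ⟨f, hf⟩ := exists_hasNatCoeffs_mul hInt hx hz
  have hts : 2 * t + s = 3 := by
    have h : ((2 * t + s : ℕ) : ℂ) = (3 : ℕ) := by push_cast; linear_combination hip - hxy
    exact_mod_cast h
  have hfy : f y = 1 + t := by exact_mod_cast (hf y hy).symm.trans hxzy
  have hsq : ∑ b ∈ T.B, f b ^ 2 = 1 + s := by
    have h := (hf.map_eq (T.ip (x * z)) hf).symm.trans hxz
    simp only [← sq] at h
    exact_mod_cast h
  have hle : f y ^ 2 ≤ 1 + s := hsq ▸ single_le_sum (f := fun b => f b ^ 2) (by simp) hy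
  have ht : t = 0 := by rw [hfy] at hle; nlinarith
  exact ⟨f, hf, by omega, by omega⟩

lemma deg_bar_eq_of_mul_bar_eq (hdx : T.deg x = 3) (hdy : T.deg y = 8)
    (hmul : x * T.bar x = 1 + y) (hsq : x * x = T.bar x + z) :
    T.deg (T.bar x) = 3 ∧ T.deg (T.bar z) = 6 := by
  have hdx' : T.deg (T.bar x) = 3 := by
    have h := congrArg T.deg hmul
    rw [map_mul, map_add, map_one, hdx, hdy] at h
    linear_combination h / 3
  refine ⟨hdx', ?_⟩
  have h := congrArg (T.deg ∘ T.bar) hsq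
  simp only [Function.comp_apply, map_mul, map_add, T.bar_bar, hdx', hdx] at h
  linear_combination -h

lemma exists_ne_of_ip_eq_five (hInt : T.Integral) (hSmall : T.NoSmall) (hx : x ∈ T.B)
    (hy : y ∈ T.B) (hz : z ∈ T.B) (hdx : T.deg x = 3) (hdy : T.deg y = 8) (hdz : T.deg z = 6)
    (hmul : x * T.bar x = 1 + y) (hsq : x * x = T.bar x + z) (hip : T.ip (x * y) (x * y) = 5) :
    ∃ p ∈ T.B, ∃ q ∈ T.B, p ≠ q ∧ T.deg p = 3 ∧ T.deg (T.bar q) = 3 ∧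
      T.ip (x * z) p ≠ 0 ∧ T.ip (x * z) q ≠ 0 := by
  classical
  obtain ⟨d, hd⟩ := exists_natDeg hInt hSmall
  obtain ⟨f, hf, hfy, hf2⟩ := exists_hasNatCoeffs_of_ip_eq_five hInt hx hy hz hmul hsq hip
  obtain ⟨hdx', hdz'⟩ := deg_bar_eq_of_mul_bar_eq hdx hdy hmul hsq
  have hf1 : f 1 = 0 := by
    have hxz : T.bar x ≠ z := fun h => by norm_num [h, hdz] at hdx'
    have h := hf 1 T.one_mem
    rw [T.ip_mul_one, T.ip_ne _ (T.bar_mem x hx) z hz hxz] at h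
    exact_mod_cast h.symm
  have hdeg : ∑ b ∈ T.B, f b * d b = 18 := by
    have h := hf.map_eq T.deg.toLinearMap fun b hb => (hd b hb).1
    rw [AlgHom.toLinearMap_apply, map_mul, hdx, hdz] at h
    exact_mod_cast (h.symm.trans (by norm_num : (3 * 6 : ℂ) = (18 : ℕ)))
  -- `deg b̄ = deg b` is not available, so the degrees of conjugates are tracked separately.
  have hdeg' : ∑ b ∈ T.B, f b * d (T.bar b) = 18 := by
    have h := hf.map_eq (T.deg.toLinearMap ∘ₗ T.bar.toLinearMap)
      fun b hb => (hd _ (T.bar_mem b hb)).1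
    simp only [LinearMap.comp_apply, AlgHom.toLinearMap_apply, map_mul, hdx', hdz'] at h
    exact_mod_cast (h.symm.trans (by norm_num : (3 * 6 : ℂ) = (18 : ℕ)))
  have hd8 : d y = 8 := by exact_mod_cast (hd y hy).1.symm.trans hdy
  rw [← add_sum_erase _ _ hy, hfy] at hf2 hdeg hdeg'
  rw [T.bar_eq_of_mul_bar_eq hmul] at hdeg'
  obtain ⟨p, hp, q, hq, hpq, hfp, hfq, hdp, hdq⟩ :=
    exists_ne_of_sum_sq_eq_three (s := T.B.erase y) (e := fun b => d (T.bar b)) (by omega)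
      (by omega) (by omega) fun b hb hfb =>
        have hb1 : b ≠ 1 := fun h => hfb (h ▸ hf1)
        ⟨(hd b (mem_of_mem_erase hb)).2 hb1, (hd _ (T.bar_mem b (mem_of_mem_erase hb))).2
          fun h => hb1 (by simpa [T.bar_bar] using congrArg T.bar h)⟩
  have hp := mem_of_mem_erase hp
  have hq := mem_of_mem_erase hq
  refine ⟨p, hp, q, hq, hpq, by rw [(hd p hp).1, hdp, Nat.cast_ofNat], by
    rw [(hd _ (T.bar_mem q hq)).1, hdq, Nat.cast_ofNat], ?_, ?_⟩
  · rw [hf p hp]; exact_mod_cast hfp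
  · rw [hf q hq]; exact_mod_cast hfq

lemma ip_mul_bar_ne_zero (hInt : T.Integral) (hx : x ∈ T.B) (hz : z ∈ T.B)
    (hmul : x * T.bar x = 1 + y) {p q : A} (hp : p ∈ T.B) (hq : q ∈ T.B) (hpq : p ≠ q)
    (hpz : T.ip (x * z) p ≠ 0) (hqz : T.ip (x * z) q ≠ 0) : T.ip (p * T.bar q) y ≠ 0 := by
  have hcross : T.ip (p * T.bar q) y = T.ip (x * T.bar p) (x * T.bar q) := by
    rw [T.ip_symm, T.ip_assoc, T.ip_assoc,
      show x * T.bar p * T.bar x = T.bar p + y * T.bar p by linear_combination T.bar p * hmul,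
      map_add, LinearMap.add_apply, T.ip_bar_bar p hq, T.ip_ne p hp q hq hpq, zero_add]
  have hcoeff : ∀ r ∈ T.B, T.ip (x * T.bar r) (T.bar z) = T.ip (x * z) r := fun r hr => by
    rw [T.ip_symm, T.ip_assoc, ← T.ip_bar_bar _ hr, map_mul (T.bar), mul_comm (T.bar x)]
  obtain ⟨fp, hfp⟩ := exists_hasNatCoeffs_mul hInt hx (T.bar_mem p hp)
  obtain ⟨fq, hfq⟩ := exists_hasNatCoeffs_mul hInt hx (T.bar_mem q hq)
  have hz' := T.bar_mem z hz
  have hfpz : fp (T.bar z) ≠ 0 := by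
    rw [← hcoeff p hp, hfp _ hz'] at hpz; exact_mod_cast hpz
  have hfqz : fq (T.bar z) ≠ 0 := by
    rw [← hcoeff q hq, hfq _ hz'] at hqz; exact_mod_cast hqz
  rw [hcross, hfq.map_eq (T.ip (x * T.bar p)) hfp, Nat.cast_ne_zero]
  exact (sum_pos' (fun _ _ => Nat.zero_le _)
    ⟨_, hz', Nat.pos_of_ne_zero (mul_ne_zero hfqz hfpz)⟩).ne'

end Configuration

end TAData

theorem stmt_7_general {A : Type} [CommRing A] [Algebra ℂ A] (T : TAData A)
    (hInt : T.Integral) (hSmall : T.NoSmall)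
    (b3 b8 b6 : A)
    (hb3 : b3 ∈ T.B) (hd3 : T.deg b3 = 3)
    (hb8 : b8 ∈ T.B) (hd8 : T.deg b8 = 8)
    (hmul : b3 * T.bar b3 = 1 + b8)
    (hb6 : b6 ∈ T.B) (hd6 : T.deg b6 = 6)
    (hsq : b3 * b3 = T.bar b3 + b6)
    (hip : T.ip (b3 * b8) (b3 * b8) = 5) : False := by
  obtain ⟨p, hp, q, hq, hpq, hdp, hdq, hpz, hqz⟩ :=
    TAData.exists_ne_of_ip_eq_five hInt hSmall hb3 hb8 hb6 hd3 hd8 hd6 hmul hsq hip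
  refine TAData.ip_mul_bar_ne_zero hInt hb3 hb6 hmul hp hq hpq hpz hqz ?_
  refine TAData.ip_mul_bar_eq_zero_of_deg_eq_succ hInt hSmall hp hq hpq hb8 ?_
  rw [map_mul, hdp, hdq, hd8]
  norm_num

/-- Theorem 4.2(1): there is no NITA generated by a non-real `b₃`
of degree 3 with `b₃·b̄₃ = 1 + b₈`, `b₃² = b̄₃ + b₆` and `(b₃b₈, b₃b₈) = 5`. -/
theorem stmt_7 {A : Type} [CommRing A] [Algebra ℂ A] (T : TAData A)
    (hInt : T.Integral) (hSmall : T.NoSmall)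
    (b3 b8 b6 : A)
    (hb3 : b3 ∈ T.B) (hd3 : T.deg b3 = 3) (hnr : T.bar b3 ≠ b3)
    (hgen : T.GeneratedBy b3)
    (hb8 : b8 ∈ T.B) (hd8 : T.deg b8 = 8)
    (hmul : b3 * T.bar b3 = 1 + b8)
    (hb6 : b6 ∈ T.B) (hd6 : T.deg b6 = 6)
    (hsq : b3 * b3 = T.bar b3 + b6)
    (hip : T.ip (b3 * b8) (b3 * b8) = 5) : False :=
  stmt_7_general T hInt hSmall b3 b8 b6 hb3 hd3 hb8 hd8 hmul hb6 hd6 hsq hip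
end
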